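/- arXiv:1409.4734 — 3 statements merged into one kernel-verified Lean document; each statement's English description precedes it below -/
import Mathlib

section
/- Let d ≥ 2, let f : ℝ^d → [0,∞) be a bounded measurable probability density, let X₁, X₂, … be i.i.d. random points in ℝ^d with density f, and let (r_n) be a sequence of positive reals with n·r_n^d → 0 as n → ∞. Then E[β₀(n, r_n)]/n → 1 as n → ∞, where β₀(n,r) is the number of connected components of the geometric graph G(n,r). -/
open MeasureTheory Filter Topology CategoryTheory ProbabilityTheory
open scoped ENNReal NNReal Manifold

noncomputable section

/-- The geometric graph on an index type `V` with vertex locations `pts` and distance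
parameter `r`: two indices are adjacent iff they are distinct and their points lie at
(Euclidean) distance less than `r`. -/
def geomGraphIdx {d : ℕ} {V : Type*} (pts : V → EuclideanSpace ℝ (Fin d)) (r : ℝ) :
    SimpleGraph V where
  Adj i j := i ≠ j ∧ dist (pts i) (pts j) < r
  symm := ⟨fun i j h => ⟨h.1.symm, by rw [dist_comm]; exact h.2⟩⟩
  loopless := ⟨fun i h => h.1 rfl⟩

/-- The geometric graph `G(n,r)` on the first `n` points of the sequence `Y`. -/
def geomGraph {d : ℕ} (n : ℕ) (r : ℝ) (Y : ℕ → EuclideanSpace ℝ (Fin d)) :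
    SimpleGraph (Fin n) :=
  geomGraphIdx (fun i : Fin n => Y i) r

/-- `β₀(n,r)`: the number of connected components of the geometric graph `G(n,r)`. -/
def numComponents {d : ℕ} (n : ℕ) (r : ℝ) (Y : ℕ → EuclideanSpace ℝ (Fin d)) : ℕ :=
  Nat.card (geomGraph n r Y).ConnectedComponent

/-- The singular homology functor with rational coefficients, in degree `i` :
singular simplicial set, followed by the free `ℚ`-module functor, the alternating face map
complex, and homology of the resulting chain complex. -/
def singularHomologyFunctor (i : ℕ) : TopCat ⥤ ModuleCat ℚ :=
  TopCat.toSSet ⋙ ((SimplicialObject.whiskering _ _).obj (ModuleCat.free ℚ)) ⋙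
    AlgebraicTopology.alternatingFaceMapComplex (ModuleCat ℚ) ⋙
    HomologicalComplex.homologyFunctor (ModuleCat ℚ) (ComplexShape.down ℕ) i

/-- `H_i(A; ℚ)`: the `i`-th singular homology of a topological space, with `ℚ` coefficients. -/
abbrev sH (i : ℕ) (A : Type) [TopologicalSpace A] : ModuleCat ℚ :=
  (singularHomologyFunctor i).obj (TopCat.of A)

/-- The `i`-th rational Betti number of a topological space. -/
def betti (i : ℕ) (A : Type) [TopologicalSpace A] : ℕ :=
  Module.finrank ℚ (sH i A)

/-- `U(n,s)`: the union of the open balls of radius `s` centered at the first `n` points. -/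
def ballUnion {d : ℕ} (n : ℕ) (s : ℝ) (Y : ℕ → EuclideanSpace ℝ (Fin d)) :
    Set (EuclideanSpace ℝ (Fin d)) :=
  ⋃ j : Fin n, Metric.ball (Y j) s

/-- `β_i(n,r)`, the `i`-th Betti number of the random Čech complex with parameter `r`:
by the Nerve theorem this is the rank of the `i`-th rational singular homology of the
union of balls of radius `r/2` around the first `n` sample points. -/
def cechBetti {d : ℕ} (i : ℕ) (n : ℕ) (r : ℝ) (Y : ℕ → EuclideanSpace ℝ (Fin d)) : ℕ :=
  betti i ↥(ballUnion n (r / 2) Y)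

/-- The morphism in `TopCat` induced by an inclusion of subspaces. -/
def inclMor {E : Type} [TopologicalSpace E] {A B : Set E} (h : A ⊆ B) :
    TopCat.of ↥A ⟶ TopCat.of ↥B :=
  TopCat.ofHom ⟨Set.inclusion h, continuous_inclusion h⟩

theorem ballUnion_mono {d : ℕ} (n : ℕ) {r s : ℝ} (h : r ≤ s)
    (Y : ℕ → EuclideanSpace ℝ (Fin d)) : ballUnion n r Y ⊆ ballUnion n s Y :=
  Set.iUnion_mono fun _ => Metric.ball_subset_ball h

end

/-! A vertex of `G(n, r)` is either isolated, and then a component of its own, or of positive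
degree; hence `n - ∑ᵥ deg v ≤ β₀(n, r) ≤ n`. Two independent points with density at most `M`
lie within distance `r` of each other with probability at most `M · vol(B(0,1)) · r^d`, so the
expected degree sum is at most `n² · M · vol(B(0,1)) · r^d`. Dividing by `n`,
`1 - M · vol(B(0,1)) · n r_n^d ≤ E[β₀(n, r_n)] / n ≤ 1`, and the left side tends to `1` in the
subcritical regime. -/

open Finset Metric

namespace SimpleGraph

variable {V : Type*} (G : SimpleGraph V)

theorem card_connectedComponent_le [Finite V] :
    Nat.card G.ConnectedComponent ≤ Nat.card V :=
  Nat.card_le_card_of_surjective _ Quot.mk_surjective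

theorem card_le_card_connectedComponent_add_sum_degree [Fintype V] [DecidableRel G.Adj] :
    Fintype.card V ≤ Nat.card G.ConnectedComponent + ∑ v, G.degree v := by
  have isolated_inj : Function.Injective
      fun v : {v // G.degree v = 0} => G.connectedComponentMk v.1 := by
    rintro ⟨v, hv⟩ ⟨w, _⟩ h
    obtain ⟨p⟩ := ConnectedComponent.exact h
    cases p with
    | nil => rfl
    | cons hadj _ => exact absurd hv (G.degree_pos_iff_exists_adj v |>.mpr ⟨_, hadj⟩).ne'
  have card_isolated : #{v | G.degree v = 0} ≤ Nat.card G.ConnectedComponent := by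
    simpa [Nat.card_eq_fintype_card, Fintype.card_subtype] using
      Nat.card_le_card_of_injective _ isolated_inj
  have card_nonisolated : #{v | G.degree v ≠ 0} ≤ ∑ v, G.degree v :=
    calc #{v | G.degree v ≠ 0} ≤ ∑ v ∈ {v | G.degree v ≠ 0}, G.degree v := by
          simpa using card_nsmul_le_sum _ _ 1 fun v hv =>
            Nat.one_le_iff_ne_zero.mpr (mem_filter.mp hv).2
      _ ≤ ∑ v, G.degree v := sum_le_sum_of_subset (subset_univ _)
  calc Fintype.card V = #{v | G.degree v = 0} + #{v | G.degree v ≠ 0} :=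
        (card_filter_add_card_filter_not _).symm
    _ ≤ _ := add_le_add card_isolated card_nonisolated

end SimpleGraph

noncomputable instance geomGraph.instDecidableRelAdj {d n : ℕ} (s : ℝ)
    (Y : ℕ → EuclideanSpace ℝ (Fin d)) : DecidableRel (geomGraph n s Y).Adj :=
  fun i j => inferInstanceAs (Decidable (i ≠ j ∧ dist (Y i) (Y j) < s))

theorem geomGraph_eq_fromRel {d n : ℕ} (s : ℝ) (Y : ℕ → EuclideanSpace ℝ (Fin d)) :
    geomGraph n s Y = SimpleGraph.fromRel fun i j : Fin n => dist (Y i) (Y j) < s := by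
  ext i j
  simp [geomGraph, geomGraphIdx, dist_comm (Y j)]

theorem numComponents_le {d n : ℕ} (s : ℝ) (Y : ℕ → EuclideanSpace ℝ (Fin d)) :
    numComponents n s Y ≤ n :=
  (geomGraph n s Y).card_connectedComponent_le.trans (Nat.card_fin n).le

theorem sum_degree_geomGraph_eq_sum_indicator {Ω : Type*} {d n : ℕ} {s : ℝ}
    (X : ℕ → Ω → EuclideanSpace ℝ (Fin d)) (ω : Ω) :
    ∑ v, ((geomGraph n s (X · ω)).degree v : ℝ)
      = ∑ i, ∑ j, {ω | (geomGraph n s (X · ω)).Adj i j}.indicator 1 ω := by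
  simp only [← SimpleGraph.card_neighborFinset_eq_degree, SimpleGraph.neighborFinset_eq_filter,
    Finset.card_filter]
  push_cast
  simp [Set.indicator_apply]

theorem withDensity_ball_le {E : Type*} [NormedAddCommGroup E] [NormedSpace ℝ E]
    [MeasurableSpace E] [BorelSpace E] [FiniteDimensional ℝ E] (μ : Measure E)
    [μ.IsAddHaarMeasure] {g : E → ℝ≥0∞} {C : ℝ≥0∞} (hg : ∀ x, g x ≤ C) (x : E) {s : ℝ}
    (hs : 0 < s) :
    μ.withDensity g (ball x s) ≤ C * μ (ball 0 1) * ENNReal.ofReal (s ^ Module.finrank ℝ E) :=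
  calc μ.withDensity g (ball x s) ≤ (C • μ) (ball x s) := by
        rw [← withDensity_const]; exact withDensity_mono (ae_of_all _ hg) _
    _ = C * μ (ball 0 1) * ENNReal.ofReal (s ^ Module.finrank ℝ E) := by
        rw [Measure.smul_apply, smul_eq_mul, μ.addHaar_ball_of_pos x hs]; ring

section Probability

variable {Ω : Type*} [MeasurableSpace Ω] {P : Measure Ω}

theorem measure_dist_lt_le_of_indepFun {E : Type*} [PseudoMetricSpace E] [MeasurableSpace E]
    [BorelSpace E] [SecondCountableTopology E] [IsProbabilityMeasure P] {X Y : Ω → E}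
    (hX : Measurable X) (hY : Measurable Y) (hXY : IndepFun X Y P) {s : ℝ} {b : ℝ≥0∞}
    (hb : ∀ x, P.map Y (ball x s) ≤ b) :
    P {ω | dist (X ω) (Y ω) < s} ≤ b := by
  have hD : MeasurableSet {p : E × E | dist p.1 p.2 < s} :=
    (isOpen_lt continuous_dist continuous_const).measurableSet
  have hmap := (indepFun_iff_map_prod_eq_prod_map_map hX.aemeasurable hY.aemeasurable).mp hXY
  calc P {ω | dist (X ω) (Y ω) < s}
      = (P.map X).prod (P.map Y) {p : E × E | dist p.1 p.2 < s} := by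
        rw [← hmap, Measure.map_apply (hX.prodMk hY) hD]; rfl
    _ = ∫⁻ x, P.map Y (ball x s) ∂P.map X := by
        rw [Measure.prod_apply hD]
        exact lintegral_congr fun x => by simp only [ball, dist_comm _ x]; rfl
    _ ≤ ∫⁻ _, b ∂P.map X := lintegral_mono hb
    _ = b := by simp [Measure.map_apply hX MeasurableSet.univ]

variable {d n : ℕ} {s : ℝ} {X : ℕ → Ω → EuclideanSpace ℝ (Fin d)}

theorem measurable_numComponents (hX : ∀ i, Measurable (X i)) :
    Measurable fun ω => numComponents n s (X · ω) := by
  have hrel : Measurable fun ω (i j : Fin n) => dist (X i ω) (X j ω) < s :=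
    measurable_pi_lambda _ fun i => measurable_pi_lambda _ fun j =>
      measurableSet_setOfPred.mp (measurableSet_lt ((hX i).dist (hX j)) measurable_const)
  simp only [numComponents, geomGraph_eq_fromRel]
  -- a function on the finite, discretely measurable type of relations on `Fin n`
  exact (measurable_of_finite fun R : Fin n → Fin n → Prop =>
    Nat.card (SimpleGraph.fromRel R).ConnectedComponent).comp hrel

theorem integral_numComponents_le [IsProbabilityMeasure P] :
    ∫ ω, (numComponents n s (X · ω) : ℝ) ∂P ≤ n :=
  calc ∫ ω, (numComponents n s (X · ω) : ℝ) ∂P ≤ ∫ _, (n : ℝ) ∂P :=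
        integral_mono_of_nonneg (ae_of_all _ fun _ => Nat.cast_nonneg _) (integrable_const _)
          (ae_of_all _ fun ω => Nat.cast_le.mpr (numComponents_le s _))
    _ = n := by simp

theorem measurableSet_geomGraph_adj (hX : ∀ i, Measurable (X i)) (i j : Fin n) :
    MeasurableSet {ω | (geomGraph n s (X · ω)).Adj i j} :=
  (MeasurableSet.const _).inter (measurableSet_lt ((hX i).dist (hX j)) measurable_const)

theorem integrable_sum_degree_geomGraph [IsFiniteMeasure P] (hX : ∀ i, Measurable (X i)) :
    Integrable (fun ω => ∑ v, ((geomGraph n s (X · ω)).degree v : ℝ)) P := by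
  simp only [sum_degree_geomGraph_eq_sum_indicator]
  exact integrable_finsetSum _ fun i _ => integrable_finsetSum _ fun j _ =>
    (integrable_const (1 : ℝ)).indicator (measurableSet_geomGraph_adj hX i j)

theorem integral_sum_degree_geomGraph_le [IsFiniteMeasure P] (hX : ∀ i, Measurable (X i))
    {b : ℝ≥0∞} (hb : b ≠ ⊤) (hpair : ∀ i j : ℕ, i ≠ j → P {ω | dist (X i ω) (X j ω) < s} ≤ b) :
    ∫ ω, ∑ v, ((geomGraph n s (X · ω)).degree v : ℝ) ∂P ≤ n * n * b.toReal := by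
  have adj_le : ∀ i j : Fin n, P.real {ω | (geomGraph n s (X · ω)).Adj i j} ≤ b.toReal := by
    refine fun i j => ENNReal.toReal_mono hb ?_
    rcases eq_or_ne i j with rfl | hij
    · simp [geomGraph, geomGraphIdx]
    · exact (measure_mono fun ω h => h.2).trans (hpair i j (Fin.val_injective.ne hij))
  have hint : ∀ i j : Fin n,
      Integrable ({ω | (geomGraph n s (X · ω)).Adj i j}.indicator (1 : Ω → ℝ)) P :=
    fun i j => (integrable_const (1 : ℝ)).indicator (measurableSet_geomGraph_adj hX i j)
  calc ∫ ω, ∑ v, ((geomGraph n s (X · ω)).degree v : ℝ) ∂P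
      = ∑ i, ∑ j, P.real {ω | (geomGraph n s (X · ω)).Adj i j} := by
        simp only [sum_degree_geomGraph_eq_sum_indicator]
        rw [integral_finsetSum _ fun i _ => integrable_finsetSum _ fun j _ => hint i j]
        simp only [integral_finsetSum _ fun j _ => hint _ j,
          integral_indicator_one (measurableSet_geomGraph_adj hX _ _)]
    _ ≤ ∑ _i : Fin n, ∑ _j : Fin n, b.toReal := by gcongr with i _ j; exact adj_le i j
    _ = n * n * b.toReal := by simp [mul_assoc]

theorem sub_le_integral_numComponents [IsProbabilityMeasure P] (hX : ∀ i, Measurable (X i))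
    {b : ℝ≥0∞} (hb : b ≠ ⊤) (hpair : ∀ i j : ℕ, i ≠ j → P {ω | dist (X i ω) (X j ω) < s} ≤ b) :
    n - n * n * b.toReal ≤ ∫ ω, (numComponents n s (X · ω) : ℝ) ∂P := by
  have hdeg_int : Integrable (fun ω => ∑ v, ((geomGraph n s (X · ω)).degree v : ℝ)) P :=
    integrable_sum_degree_geomGraph hX
  have hβ_int : Integrable (fun ω => (numComponents n s (X · ω) : ℝ)) P :=
    .of_bound (measurable_from_nat.comp (measurable_numComponents hX)).aestronglyMeasurable n <|
      ae_of_all _ fun ω => by simpa using numComponents_le s _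
  have hlow : ∀ ω, (n : ℝ) - ∑ v, ((geomGraph n s (X · ω)).degree v : ℝ)
      ≤ numComponents n s (X · ω) := fun ω => by
    have := (geomGraph n s (X · ω)).card_le_card_connectedComponent_add_sum_degree
    rw [Fintype.card_fin] at this
    rw [sub_le_iff_le_add]
    exact_mod_cast this
  calc (n : ℝ) - n * n * b.toReal
      ≤ ∫ ω, ((n : ℝ) - ∑ v, ((geomGraph n s (X · ω)).degree v : ℝ)) ∂P := by
        rw [integral_sub (integrable_const _) hdeg_int, integral_const, probReal_univ, one_smul]
        linarith [integral_sum_degree_geomGraph_le (n := n) hX hb hpair]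
    _ ≤ _ := integral_mono ((integrable_const _).sub hdeg_int) hβ_int hlow

end Probability

theorem tendsto_div_natCast_of_mul_one_sub_le {a t : ℕ → ℝ} (ht : Tendsto t atTop (𝓝 0))
    (hlow : ∀ n, n * (1 - t n) ≤ a n) (hup : ∀ n, a n ≤ n) :
    Tendsto (fun n => a n / n) atTop (𝓝 1) := by
  refine tendsto_of_tendsto_of_tendsto_of_le_of_le' (g := fun n => 1 - t n)
    (by simpa using tendsto_const_nhds.sub ht) tendsto_const_nhds ?_ ?_ <;>
    filter_upwards [eventually_gt_atTop 0] with n hn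
  · exact (le_div_iff₀ (Nat.cast_pos.mpr hn)).mpr (by linarith [hlow n])
  · exact (div_le_one (Nat.cast_pos.mpr hn)).mpr (hup n)

theorem expected_components_subcritical_general {d : ℕ}
    {Ω : Type*} [MeasurableSpace Ω] (P : Measure Ω) [IsProbabilityMeasure P]
    (f : EuclideanSpace ℝ (Fin d) → ℝ)
    (hf_bdd : ∃ M : ℝ, ∀ x, f x ≤ M)
    (X : ℕ → Ω → EuclideanSpace ℝ (Fin d))
    (hX_meas : ∀ n, Measurable (X n))
    (hX_indep : iIndepFun X P)
    (hX_law : ∀ n, Measure.map (X n) P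
      = (volume : Measure (EuclideanSpace ℝ (Fin d))).withDensity
          fun x => ENNReal.ofReal (f x))
    (r : ℕ → ℝ) (hr : ∀ n, 0 < r n)
    (hsub : Tendsto (fun n : ℕ => (n : ℝ) * r n ^ d) atTop (𝓝 0)) :
    Tendsto (fun n : ℕ => (∫ ω, (numComponents n (r n) (X · ω) : ℝ) ∂P) / n)
      atTop (𝓝 1) := by
  obtain ⟨M, hM⟩ := hf_bdd
  set K := ENNReal.ofReal M * volume (ball (0 : EuclideanSpace ℝ (Fin d)) 1)
  have hpair : ∀ n (i j : ℕ), i ≠ j →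
      P {ω | dist (X i ω) (X j ω) < r n} ≤ K * ENNReal.ofReal (r n ^ d) :=
    fun n i j hij => measure_dist_lt_le_of_indepFun (hX_meas i) (hX_meas j)
      (hX_indep.indepFun hij) fun x => by
        simpa [hX_law j, finrank_euclideanSpace_fin] using
          withDensity_ball_le volume (fun y => ENNReal.ofReal_le_ofReal (hM y)) x (hr n)
  refine tendsto_div_natCast_of_mul_one_sub_le (t := fun n => K.toReal * (n * r n ^ d))
    (by simpa using hsub.const_mul K.toReal) (fun n => ?_) fun n => integral_numComponents_le
  have hlow := sub_le_integral_numComponents (n := n) hX_meas (by finiteness) (hpair n)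
  rw [ENNReal.toReal_mul, ENNReal.toReal_ofReal (pow_nonneg (hr n).le d)] at hlow
  linarith

/-- in the subcritical regime `n·r_n^d → 0`, the expected number of connected
components of the random geometric graph satisfies `E[β₀(n, r_n)]/n → 1`. -/
theorem expected_components_subcritical {d : ℕ} (hd : 2 ≤ d)
    {Ω : Type*} [MeasurableSpace Ω] (P : Measure Ω) [IsProbabilityMeasure P]
    (f : EuclideanSpace ℝ (Fin d) → ℝ)
    (hf_meas : Measurable f) (hf_nonneg : ∀ x, 0 ≤ f x)
    (hf_bdd : ∃ M : ℝ, ∀ x, f x ≤ M) (hf_prob : ∫ x, f x = 1)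
    (X : ℕ → Ω → EuclideanSpace ℝ (Fin d))
    (hX_meas : ∀ n, Measurable (X n))
    (hX_indep : iIndepFun X P)
    (hX_law : ∀ n, Measure.map (X n) P
      = (volume : Measure (EuclideanSpace ℝ (Fin d))).withDensity
          fun x => ENNReal.ofReal (f x))
    (r : ℕ → ℝ) (hr : ∀ n, 0 < r n)
    (hsub : Tendsto (fun n : ℕ => (n : ℝ) * r n ^ d) atTop (𝓝 0)) :
    Tendsto (fun n : ℕ => (∫ ω, (numComponents n (r n) (X · ω) : ℝ) ∂P) / n)
      atTop (𝓝 1) :=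
  expected_components_subcritical_general P f hf_bdd X hX_meas hX_indep hX_law r hr hsub
end

section
/- Let d ≥ 2, let K ⊆ ℝ^d be a convex body (compact convex set with nonempty interior), and let X₁, X₂, … be i.i.d. random points uniformly distributed in K. Then there exists a constant B > 0 (depending only on K and d) such that for any sequence of positive reals (r_n) with r_n → 0 and n·r_n^d ≥ B·log n for all large n, asymptotically almost surely the balls of radius r_n/2 around the sample points cover K; that is, P( K ⊆ ⋃_{j=1}^{n} B(X_j, r_n/2) ) → 1 as n → ∞. -/
open MeasureTheory Filter Topology CategoryTheory ProbabilityTheory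
open scoped ENNReal NNReal Manifold

/-!
Cover `K` by a maximal `r/4`-separated set `T ⊆ K`. The balls of radius `r/8` around the points
of `T` are disjoint and lie in the unit thickening of `K`, so `#T = O(r⁻ᵈ)`. With
`D = diam K + 1`, the homothety of ratio `r/(4D)` centred at a point `c ∈ K` maps the convex set
`K` into `K ∩ B(c, r/4)`, so each sample point lands in that ball with probability at least
`(r/(4D))ᵈ`. By independence and a union bound, some ball `B(c, r/4)`, `c ∈ T`, receives no sample
point with probability at most `#T · exp(-n (r/(4D))ᵈ)`, which is at most `#T · n⁻² = O(1/n)` as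
soon as `n rᵈ ≥ 2 (4D)ᵈ log n` (this also gives `r⁻ᵈ = O(n)`). Otherwise every point of `K` is within `r/4 + r/4` of a sample point.
-/

open Metric

namespace Metric

section Packing

variable {E : Type*} [NormedAddCommGroup E] [MeasurableSpace E] [BorelSpace E]
  (μ : Measure E) [μ.IsAddHaarMeasure] {A : Set E} {ε : ℝ≥0}

theorem IsSeparated.card_mul_addHaar_ball_le {T : Finset E}
    (hT : IsSeparated ε (T : Set E)) (hTA : (T : Set E) ⊆ A) :
    (T.card : ℝ≥0∞) * μ (ball 0 (ε / 2)) ≤ μ (thickening (ε / 2) A) := by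
  have hdisj : (T : Set E).PairwiseDisjoint fun c => ball c (ε / 2) := by
    intro a ha b hb hab
    refine ball_disjoint_ball ?_
    have hab : (ε : ℝ≥0∞) < edist a b := hT ha hb hab
    rw [edist_nndist, ENNReal.coe_lt_coe, ← NNReal.coe_lt_coe, coe_nndist] at hab
    linarith
  calc (T.card : ℝ≥0∞) * μ (ball 0 (ε / 2))
      = ∑ c ∈ T, μ (ball c (ε / 2)) := by
        simp only [Measure.addHaar_ball_center, Finset.sum_const, nsmul_eq_mul]
    _ = μ (⋃ c ∈ T, ball c (ε / 2)) :=
        (measure_biUnion_finset hdisj fun _ _ => measurableSet_ball).symm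
    _ ≤ μ (thickening (ε / 2) A) :=
        measure_mono <| Set.iUnion₂_subset fun c hc =>
          ball_subset_thickening (hTA hc) _

theorem packingNumber_ne_top_of_totallyBounded {X : Type*} [PseudoEMetricSpace X] {A : Set X}
    (hA : TotallyBounded A) (hε : ε ≠ 0) : packingNumber ε A ≠ ⊤ := by
  obtain ⟨N, -, hN, hcover⟩ := exists_finite_isCover_of_totallyBounded (ε := ε / 2) (by simpa) hA
  have hpack := packingNumber_two_mul_le_externalCoveringNumber (ε / 2) A
  rw [mul_div_cancel₀ ε two_ne_zero] at hpack
  exact (hpack.trans hcover.externalCoveringNumber_le_encard).trans_lt hN.encard_lt_top |>.ne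

theorem exists_finset_isCover_card_mul_addHaar_ball_le (hA : TotallyBounded A)
    (hε : ε ≠ 0) :
    ∃ T : Finset E, (T : Set E) ⊆ A ∧ IsCover ε A T ∧
      (T.card : ℝ≥0∞) * μ (ball 0 (ε / 2)) ≤ μ (thickening (ε / 2) A) := by
  have hpack := packingNumber_ne_top_of_totallyBounded hA hε
  have hfin : (maximalSeparatedSet ε A).Finite :=
    Set.encard_ne_top_iff.mp (encard_maximalSeparatedSet hpack ▸ hpack)
  refine ⟨hfin.toFinset, ?_, ?_, ?_⟩
  · simpa using maximalSeparatedSet_subset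
  · simpa using isCover_maximalSeparatedSet hpack
  · exact IsSeparated.card_mul_addHaar_ball_le μ (by simpa using isSeparated_maximalSeparatedSet)
      (by simpa using maximalSeparatedSet_subset)

end Packing

end Metric

section Homothety

variable {E : Type*} [NormedAddCommGroup E] [NormedSpace ℝ E] [MeasurableSpace E] [BorelSpace E]
  [FiniteDimensional ℝ E] (μ : Measure E) [μ.IsAddHaarMeasure]

theorem Convex.ofReal_div_pow_mul_le_addHaar_inter_ball {K : Set E} (hK : Convex ℝ K)
    (hKb : Bornology.IsBounded K) {x : E} (hx : x ∈ K) {s D : ℝ} (hs : 0 < s) (hsD : s ≤ D)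
    (hD : diam K < D) :
    ENNReal.ofReal ((s / D) ^ Module.finrank ℝ E) * μ K ≤ μ (K ∩ ball x s) := by
  have hD0 : 0 < D := hs.trans_le hsD
  have ht : s / D ∈ Set.Icc (0 : ℝ) 1 := ⟨by positivity, (div_le_one hD0).mpr hsD⟩
  have himage : AffineMap.homothety x (s / D) '' K ⊆ K ∩ ball x s := by
    rintro _ ⟨y, hy, rfl⟩
    refine ⟨?_, ?_⟩
    · rw [AffineMap.homothety_eq_lineMap]
      exact hK.lineMap_mem hx hy ht
    · rw [mem_ball, dist_homothety_center, Real.norm_of_nonneg ht.1]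
      calc s / D * dist x y ≤ s / D * diam K :=
            mul_le_mul_of_nonneg_left (dist_le_diam_of_mem hKb hx hy) ht.1
        _ < s / D * D := mul_lt_mul_of_pos_left hD (by positivity)
        _ = s := div_mul_cancel₀ s hD0.ne'
  calc ENNReal.ofReal ((s / D) ^ Module.finrank ℝ E) * μ K
      = μ (AffineMap.homothety x (s / D) '' K) := by
        rw [Measure.addHaar_image_homothety, abs_of_nonneg (pow_nonneg ht.1 _)]
    _ ≤ μ (K ∩ ball x s) := measure_mono himage

end Homothety

theorem ENNReal.one_sub_ofReal_le_ofReal_exp_neg (p : ℝ) :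
    1 - ENNReal.ofReal p ≤ ENNReal.ofReal (Real.exp (-p)) := by
  rw [tsub_le_iff_right, ← ENNReal.ofReal_one]
  calc ENNReal.ofReal 1 ≤ ENNReal.ofReal (Real.exp (-p) + p) :=
        ENNReal.ofReal_le_ofReal (by linarith [Real.add_one_le_exp (-p)])
    _ ≤ ENNReal.ofReal (Real.exp (-p)) + ENNReal.ofReal p := ENNReal.ofReal_add_le

namespace ProbabilityTheory

variable {Ω β : Type*} [MeasurableSpace Ω] [MeasurableSpace β] {P : Measure Ω}
  [IsProbabilityMeasure P] {X : ℕ → Ω → β}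

theorem iIndepFun.measure_iInter_preimage_compl_le_exp (hX : iIndepFun X P)
    (hXm : ∀ j, AEMeasurable (X j) P) {S : Set β} (hS : MeasurableSet S) {p : ℝ}
    (hp : ∀ j, ENNReal.ofReal p ≤ P (X j ⁻¹' S)) (n : ℕ) :
    P (⋂ j ∈ Finset.range n, X j ⁻¹' Sᶜ) ≤ ENNReal.ofReal (Real.exp (-(n * p))) := by
  have hmiss (j : ℕ) : P (X j ⁻¹' Sᶜ) ≤ ENNReal.ofReal (Real.exp (-p)) := by
    rw [Set.preimage_compl, prob_compl_eq_one_sub₀ ((hXm j).nullMeasurableSet_preimage hS)]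
    exact (tsub_le_tsub_left (hp j) 1).trans (ENNReal.one_sub_ofReal_le_ofReal_exp_neg p)
  calc P (⋂ j ∈ Finset.range n, X j ⁻¹' Sᶜ)
      = ∏ j ∈ Finset.range n, P (X j ⁻¹' Sᶜ) :=
        hX.measure_inter_preimage_eq_mul _ fun _ _ => hS.compl
    _ ≤ ∏ _j ∈ Finset.range n, ENNReal.ofReal (Real.exp (-p)) :=
        Finset.prod_le_prod' fun j _ => hmiss j
    _ = ENNReal.ofReal (Real.exp (-(n * p))) := by
        rw [Finset.prod_const, Finset.card_range, ← ENNReal.ofReal_pow (Real.exp_nonneg _),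
          ← Real.exp_nat_mul, mul_neg]

end ProbabilityTheory

section BallUnion

variable {d : ℕ}

theorem subset_ballUnion_of_isCover {n : ℕ} {Y : ℕ → EuclideanSpace ℝ (Fin d)}
    {K T : Set (EuclideanSpace ℝ (Fin d))} {ε : ℝ≥0} {s : ℝ} (hT : IsCover ε K T)
    (hY : ∀ c ∈ T, ∃ j < n, dist (Y j) c < s) : K ⊆ ballUnion n (ε + s) Y := by
  intro x hx
  obtain ⟨c, hcT, hxc⟩ := hT hx
  obtain ⟨j, hj, hjc⟩ := hY c hcT
  change edist x c ≤ ε at hxc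
  rw [edist_nndist, ENNReal.coe_le_coe, ← NNReal.coe_le_coe, coe_nndist] at hxc
  refine Set.mem_iUnion.mpr ⟨⟨j, hj⟩, ?_⟩
  calc dist x (Y j) ≤ dist x c + dist (Y j) c := dist_triangle_right _ _ _
    _ < ε + s := add_lt_add_of_le_of_lt hxc hjc

variable {Ω : Type*} [MeasurableSpace Ω] {P : Measure Ω} [IsProbabilityMeasure P]
  {X : ℕ → Ω → EuclideanSpace ℝ (Fin d)}

theorem measure_not_subset_ballUnion_le (hX : iIndepFun X P) (hXm : ∀ j, AEMeasurable (X j) P)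
    {K : Set (EuclideanSpace ℝ (Fin d))} {T : Finset (EuclideanSpace ℝ (Fin d))} {ε : ℝ≥0}
    (hT : IsCover ε K T) {s p : ℝ} (hp : ∀ c ∈ T, ∀ j, ENNReal.ofReal p ≤ P (X j ⁻¹' ball c s))
    (n : ℕ) :
    P {ω | ¬K ⊆ ballUnion n (ε + s) (X · ω)}
      ≤ T.card * ENNReal.ofReal (Real.exp (-(n * p))) := by
  have hmissed : {ω | ¬K ⊆ ballUnion n (ε + s) (X · ω)}
      ⊆ ⋃ c ∈ T, ⋂ j ∈ Finset.range n, X j ⁻¹' (ball c s)ᶜ := by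
    intro ω hω
    by_contra hcaught
    refine hω (subset_ballUnion_of_isCover hT fun c hc => ?_)
    by_contra! hfar
    exact hcaught (Set.mem_biUnion hc (by simpa using hfar))
  calc P {ω | ¬K ⊆ ballUnion n (ε + s) (X · ω)}
      ≤ ∑ c ∈ T, P (⋂ j ∈ Finset.range n, X j ⁻¹' (ball c s)ᶜ) :=
        (measure_mono hmissed).trans (measure_biUnion_finset_le T _)
    _ ≤ ∑ _c ∈ T, ENNReal.ofReal (Real.exp (-(n * p))) := Finset.sum_le_sum fun c hc =>
        hX.measure_iInter_preimage_compl_le_exp hXm measurableSet_ball (hp c hc) n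
    _ = T.card * ENNReal.ofReal (Real.exp (-(n * p))) := by
        rw [Finset.sum_const, nsmul_eq_mul]

end BallUnion

section ConvexBody

variable {d : ℕ} {K : Set (EuclideanSpace ℝ (Fin d))} {Ω : Type*} [MeasurableSpace Ω]
  {P : Measure Ω} [IsProbabilityMeasure P] {X : ℕ → Ω → EuclideanSpace ℝ (Fin d)}

theorem one_sub_le_toReal_measure_subset_ballUnion (hK : IsCompact K) (hKc : Convex ℝ K)
    (hK0 : volume K ≠ 0) (hX : iIndepFun X P) (hXu : ∀ j, pdf.IsUniform (X j) K P)
    {s : ℝ} (hs : 0 < s) (hs1 : s ≤ 1) (n : ℕ) :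
    1 - (volume (thickening 1 K)).toReal
          / ((s / 2) ^ d * (volume (ball (0 : EuclideanSpace ℝ (Fin d)) 1)).toReal)
          * Real.exp (-(n * (s / (diam K + 1)) ^ d))
      ≤ (P {ω | K ⊆ ballUnion n (2 * s) (X · ω)}).toReal := by
  have hKtop : volume K ≠ ⊤ := hK.measure_lt_top.ne
  obtain ⟨T, hTK, hT, hcard⟩ :=
    exists_finset_isCover_card_mul_addHaar_ball_le volume hK.totallyBounded
      (ε := s.toNNReal) (Real.toNNReal_pos.mpr hs).ne'
  rw [Real.coe_toNNReal _ hs.le] at hcard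
  have hhit : ∀ c ∈ T, ∀ j,
      ENNReal.ofReal ((s / (diam K + 1)) ^ d) ≤ P (X j ⁻¹' ball c s) := by
    intro c hc j
    rw [(hXu j).measure_preimage hK0 hKtop measurableSet_ball,
      ENNReal.le_div_iff_mul_le (Or.inl hK0) (Or.inl hKtop)]
    simpa using hKc.ofReal_div_pow_mul_le_addHaar_inter_ball volume hK.isBounded (hTK hc) hs
      (by linarith [diam_nonneg (s := K)]) (lt_add_one _)
  have hmiss := measure_not_subset_ballUnion_le hX
    (fun j => (hXu j).aemeasurable hK0 hKtop) hT hhit n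
  rw [Real.coe_toNNReal _ hs.le, ← two_mul] at hmiss
  set V := (volume (thickening 1 K)).toReal
  set v := (volume (ball (0 : EuclideanSpace ℝ (Fin d)) 1)).toReal
  set e := Real.exp (-(n * (s / (diam K + 1)) ^ d))
  have hv : 0 < v := ENNReal.toReal_pos (measure_ball_pos volume _ one_pos).ne'
    measure_ball_lt_top.ne
  have hcardR : (T.card : ℝ) * ((s / 2) ^ d * v) ≤ V := by
    have hV : volume (thickening 1 K) ≠ ⊤ := hK.isBounded.thickening.measure_lt_top.ne
    have hcard' := hcard.trans (measure_mono (thickening_mono (show s / 2 ≤ 1 by linarith) K))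
    rw [Measure.addHaar_ball_of_pos _ _ (by positivity), finrank_euclideanSpace_fin] at hcard'
    have h := ENNReal.toReal_mono hV hcard'
    rwa [ENNReal.toReal_mul, ENNReal.toReal_mul, ENNReal.toReal_natCast,
      ENNReal.toReal_ofReal (by positivity)] at h
  have hfail : (P {ω | K ⊆ ballUnion n (2 * s) (X · ω)}ᶜ).toReal ≤ T.card * e := by
    rw [Set.compl_ofPred]
    simpa [ENNReal.toReal_mul, e, Real.exp_nonneg] using
      ENNReal.toReal_mono (by finiteness) hmiss
  have htotal : 1 ≤ (P {ω | K ⊆ ballUnion n (2 * s) (X · ω)}).toReal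
      + (P {ω | K ⊆ ballUnion n (2 * s) (X · ω)}ᶜ).toReal := by
    rw [← ENNReal.toReal_add (measure_ne_top _ _) (measure_ne_top _ _)]
    simpa using ENNReal.toReal_mono (by finiteness) (measure_univ_le_add_compl (μ := P) _)
  have hcard_le : (T.card : ℝ) ≤ V / ((s / 2) ^ d * v) := by
    rwa [le_div_iff₀ (by positivity)]
  linarith [mul_le_mul_of_nonneg_right hcard_le (Real.exp_nonneg _ : 0 ≤ e)]

end ConvexBody

theorem inv_pow_mul_exp_neg_le {a r N : ℝ} (d : ℕ) (ha : 0 < a) (hr : 0 < r)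
    (hN : 1 ≤ Real.log N) (h : 2 * a ^ d * Real.log N ≤ N * r ^ d) :
    (r ^ d)⁻¹ * Real.exp (-(N * (r / a) ^ d)) ≤ (2 * a ^ d * N)⁻¹ := by
  have hN0 : 0 < N := by
    by_contra! hN0
    nlinarith [mul_nonpos_of_nonpos_of_nonneg hN0 (pow_pos hr d).le, pow_pos ha d]
  have hexp : Real.exp (-(N * (r / a) ^ d)) ≤ (N ^ 2)⁻¹ := by
    have h2 : 2 * Real.log N ≤ N * (r / a) ^ d := by
      rw [div_pow, ← mul_div_assoc, le_div_iff₀ (by positivity)]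
      linarith
    calc Real.exp (-(N * (r / a) ^ d)) ≤ Real.exp (-(2 * Real.log N)) := by gcongr
      _ = (N ^ 2)⁻¹ := by
        rw [Real.exp_neg, two_mul, Real.exp_add, Real.exp_log hN0, sq]
  have hrd : (r ^ d)⁻¹ ≤ N / (2 * a ^ d) := by
    rw [inv_le_comm₀ (by positivity) (by positivity), inv_div, div_le_iff₀ hN0]
    nlinarith [pow_pos ha d]
  calc (r ^ d)⁻¹ * Real.exp (-(N * (r / a) ^ d)) ≤ N / (2 * a ^ d) * (N ^ 2)⁻¹ :=
        mul_le_mul hrd hexp (Real.exp_nonneg _) (by positivity)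
    _ = (2 * a ^ d * N)⁻¹ := by field_simp

theorem convex_body_coverage_general {d : ℕ}
    {Ω : Type*} [MeasurableSpace Ω] (P : Measure Ω) [IsProbabilityMeasure P]
    (K : Set (EuclideanSpace ℝ (Fin d)))
    (hK_compact : IsCompact K) (hK_convex : Convex ℝ K)
    (hK_interior : (interior K).Nonempty)
    (X : ℕ → Ω → EuclideanSpace ℝ (Fin d))
    (hX_indep : iIndepFun X P)
    (hX_law : ∀ n, Measure.map (X n) P
      = (volume K)⁻¹ • (volume : Measure (EuclideanSpace ℝ (Fin d))).restrict K)
 :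
    ∃ B : ℝ, 0 < B ∧
      ∀ r : ℕ → ℝ, (∀ n, 0 < r n) → Tendsto r atTop (𝓝 0) →
        (∀ᶠ n : ℕ in atTop, B * Real.log n ≤ (n : ℝ) * r n ^ d) →
        Tendsto (fun n : ℕ => (P {ω | K ⊆ ballUnion n (r n / 2) (X · ω)}).toReal)
          atTop (𝓝 1) := by
  have hK0 : volume K ≠ 0 := (Measure.measure_pos_of_nonempty_interior volume hK_interior).ne'
  set D := diam K + 1
  set B := 2 * (4 * D) ^ d
  set V := (volume (thickening 1 K)).toReal
  set v := (volume (ball (0 : EuclideanSpace ℝ (Fin d)) 1)).toReal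
  set C := V * 8 ^ d / v / B
  refine ⟨B, by positivity, fun r hr hr0 hreg => ?_⟩
  have hcover : ∀ᶠ n : ℕ in atTop,
      1 - C / n ≤ (P {ω | K ⊆ ballUnion n (r n / 2) (X · ω)}).toReal := by
    filter_upwards [hr0.eventually (eventually_le_nhds one_pos), hreg,
      (Real.tendsto_log_atTop.comp tendsto_natCast_atTop_atTop).eventually_ge_atTop 1]
      with n hrn hregn hlog
    have hbound := one_sub_le_toReal_measure_subset_ballUnion hK_compact hK_convex hK0 hX_indep
      hX_law (s := r n / 4) (by linarith [hr n]) (by linarith) n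
    rw [show 2 * (r n / 4) = r n / 2 by ring] at hbound
    refine le_trans (sub_le_sub_left ?_ 1) hbound
    have hdecay := inv_pow_mul_exp_neg_le d (a := 4 * D) (by positivity) (hr n) hlog hregn
    calc V / ((r n / 4 / 2) ^ d * v) * Real.exp (-(n * (r n / 4 / D) ^ d))
        = V * 8 ^ d / v * ((r n ^ d)⁻¹ * Real.exp (-(n * (r n / (4 * D)) ^ d))) := by
          rw [div_div (r n) 4 D, div_div (r n) 4 2, div_pow]
          field_simp
          norm_num
      _ ≤ V * 8 ^ d / v * (B * n)⁻¹ := by gcongr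
      _ = C / n := by ring
  refine tendsto_of_tendsto_of_tendsto_of_le_of_le' ?_ tendsto_const_nhds hcover
    (Eventually.of_forall fun n => ENNReal.toReal_le_of_le_ofReal zero_le_one ?_)
  · simpa using tendsto_const_nhds.sub (tendsto_const_div_atTop_nhds_zero_nat C)
  · simpa using prob_le_one

/-- coverage of a convex body in the supercritical regime: there is `B > 0` such
that if `n·r_n^d ≥ B·log n` (for all large `n`) and `r_n → 0`, then a.a.s. the balls of radius
`r_n/2` around the sample points cover `K`. -/
theorem convex_body_coverage {d : ℕ} (hd : 2 ≤ d)
    {Ω : Type*} [MeasurableSpace Ω] (P : Measure Ω) [IsProbabilityMeasure P]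
    (K : Set (EuclideanSpace ℝ (Fin d)))
    (hK_compact : IsCompact K) (hK_convex : Convex ℝ K)
    (hK_interior : (interior K).Nonempty)
    (X : ℕ → Ω → EuclideanSpace ℝ (Fin d))
    (hX_meas : ∀ n, Measurable (X n))
    (hX_indep : iIndepFun X P)
    (hX_law : ∀ n, Measure.map (X n) P
      = (volume K)⁻¹ • (volume : Measure (EuclideanSpace ℝ (Fin d))).restrict K)
 :
    ∃ B : ℝ, 0 < B ∧
      ∀ r : ℕ → ℝ, (∀ n, 0 < r n) → Tendsto r atTop (𝓝 0) →
        (∀ᶠ n : ℕ in atTop, B * Real.log n ≤ (n : ℝ) * r n ^ d) →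
        Tendsto (fun n : ℕ => (P {ω | K ⊆ ballUnion n (r n / 2) (X · ω)}).toReal)
          atTop (𝓝 1) :=
  convex_body_coverage_general P K hK_compact hK_convex hK_interior X hX_indep hX_law
end

section
/- Let d ≥ 2, let K ⊆ ℝ^d be a convex body (compact convex set with nonempty interior), and let X₁, X₂, … be i.i.d. random points uniformly distributed in K. Then there exists a constant B > 0 such that for any sequence of positive reals (r_n) with r_n → 0 and n·r_n^d ≥ B·log n for all large n, asymptotically almost surely the union U(n, r_n/2) = ⋃_{j=1}^{n} B(X_j, r_n/2) is a contractible topological space. -/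
open MeasureTheory Filter Topology CategoryTheory ProbabilityTheory
open scoped ENNReal NNReal Manifold

/-! On the event that all sample points lie in `K` and their `r/2`-balls cover `K`, the union of
balls deformation retracts onto the convex set `K` along the segments to the nearest-point
projection (which is 1-Lipschitz and fixes the centres, hence maps each ball into itself), so it is
contractible. A convex body fills a proportion `≳ t^d` of every ball of radius `t ≤ 1` centred in
it; hence a maximal `r/4`-separated subset of `K` is an `r/4`-net with `O(r^{-d})` points, and
the `r/4`-ball around a given net point is missed by all `n` points with probability at most
`exp (-c n r^d)`. The union bound gives failure probability `O(r^{-d} exp (-c n r^d)) = O(1/n)`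
once `n r^d ≥ B log n`. -/

noncomputable section

open Metric

section Contractible

variable {E : Type*} [AddCommGroup E] [Module ℝ E] [TopologicalSpace E] [IsTopologicalAddGroup E]
  [ContinuousSMul ℝ E]

theorem ContinuousMap.homotopic_of_segment_subset {X : Type*} [TopologicalSpace X] {U : Set E}
    (f g : C(X, U)) (h : ∀ x, segment ℝ (f x : E) (g x) ⊆ U) : f.Homotopic g :=
  ⟨{ toFun := fun p => ⟨(1 - (p.1 : ℝ)) • (f p.2 : E) + (p.1 : ℝ) • (g p.2 : E),
        h p.2 ⟨_, _, sub_nonneg.2 p.1.2.2, p.1.2.1, sub_add_cancel 1 _, rfl⟩⟩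
     continuous_toFun := by fun_prop
     map_zero_left := by simp
     map_one_left := by simp }⟩

theorem contractibleSpace_of_segment_retraction {U K : Set E} (hK : Convex ℝ K)
    (hne : K.Nonempty) (hKU : K ⊆ U) {p : E → E} (hp : ContinuousOn p U) (hpK : Set.MapsTo p U K)
    (hseg : ∀ x ∈ U, segment ℝ x (p x) ⊆ U) : ContractibleSpace U := by
  have := hK.contractibleSpace hne
  let q : C(U, K) := ⟨hpK.restrict p U K, hp.mapsToRestrict hpK⟩
  let ι : C(K, U) := ⟨Set.inclusion hKU, continuous_inclusion hKU⟩
  obtain ⟨y, hy⟩ := ((id_nullhomotopic K).comp_left q).comp_right ι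
  refine (contractible_iff_id_nullhomotopic U).2 ⟨y, .trans ?_ hy⟩
  exact ContinuousMap.homotopic_of_segment_subset _ _ fun x => hseg x x.2

end Contractible

section ConvexProjection

open scoped RealInnerProductSpace

variable {F : Type*} [NormedAddCommGroup F] [InnerProductSpace ℝ F] {K : Set F}

def convexProj (hne : K.Nonempty) (hc : IsComplete K) (hcv : Convex ℝ K) (u : F) : F :=
  (exists_norm_eq_iInf_of_complete_convex hne hc hcv u).choose

variable (hne : K.Nonempty) (hc : IsComplete K) (hcv : Convex ℝ K)

theorem convexProj_mem (u : F) : convexProj hne hc hcv u ∈ K :=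
  (exists_norm_eq_iInf_of_complete_convex hne hc hcv u).choose_spec.1

theorem inner_sub_convexProj_nonpos (u : F) {w : F} (hw : w ∈ K) :
    ⟪u - convexProj hne hc hcv u, w - convexProj hne hc hcv u⟫ ≤ 0 := by
  have h := (exists_norm_eq_iInf_of_complete_convex hne hc hcv u).choose_spec
  exact (norm_eq_iInf_iff_real_inner_le_zero hcv h.1).1 h.2 w hw

theorem convexProj_eq_self {u : F} (hu : u ∈ K) : convexProj hne hc hcv u = u := by
  have h := inner_sub_convexProj_nonpos hne hc hcv u hu
  exact (sub_eq_zero.1 (real_inner_self_nonpos.1 h)).symm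

theorem lipschitzWith_convexProj : LipschitzWith 1 (convexProj hne hc hcv) := by
  refine LipschitzWith.of_dist_le_mul fun u v => ?_
  set p := convexProj hne hc hcv u
  set q := convexProj hne hc hcv v
  have hu : ⟪u - p, q - p⟫ ≤ 0 := inner_sub_convexProj_nonpos hne hc hcv u (convexProj_mem ..)
  have hv : ⟪v - q, p - q⟫ ≤ 0 := inner_sub_convexProj_nonpos hne hc hcv v (convexProj_mem ..)
  -- adding the two variational inequalities gives `‖p - q‖² ≤ ⟪u - v, p - q⟫`
  have key : ‖p - q‖ ^ 2 ≤ ‖u - v‖ * ‖p - q‖ := by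
    have : ⟪u - v, p - q⟫ - ‖p - q‖ ^ 2 = -⟪u - p, q - p⟫ - ⟪v - q, p - q⟫ := by
      rw [← real_inner_self_eq_norm_sq, ← inner_sub_left,
        show u - v - (p - q) = (u - p) - (v - q) by abel, inner_sub_left, ← neg_sub p q,
        inner_neg_right, neg_neg]
    nlinarith [real_inner_le_norm (u - v) (p - q)]
  rw [NNReal.coe_one, one_mul, dist_eq_norm, dist_eq_norm]
  nlinarith [norm_nonneg (p - q), norm_nonneg (u - v)]

end ConvexProjection

theorem contractibleSpace_iUnion_ball {F ι : Type*} [NormedAddCommGroup F] [InnerProductSpace ℝ F]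
    {K : Set F} (hne : K.Nonempty) (hc : IsComplete K) (hcv : Convex ℝ K) {c : ι → F} {s : ℝ}
    (hcK : ∀ i, c i ∈ K) (hcov : K ⊆ ⋃ i, ball (c i) s) :
    ContractibleSpace (⋃ i, ball (c i) s) := by
  have hlip := lipschitzWith_convexProj hne hc hcv
  refine contractibleSpace_of_segment_retraction hcv hne hcov hlip.continuous.continuousOn
    (fun x _ => convexProj_mem hne hc hcv x) fun x hx => ?_
  obtain ⟨i, hi⟩ := Set.mem_iUnion.1 hx
  -- the projection is 1-Lipschitz and fixes `c i`, so it maps `ball (c i) s` into itself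
  have hpi : convexProj hne hc hcv x ∈ ball (c i) s := by
    rw [mem_ball, ← convexProj_eq_self hne hc hcv (hcK i)]
    simpa using (hlip.dist_le_mul x (c i)).trans_lt (by simpa using hi)
  exact ((convex_ball _ _).segment_subset hi hpi).trans
    (Set.subset_iUnion (fun i => ball (c i) s) i)

section ConvexBody

open Pointwise Module

variable {E : Type*} [NormedAddCommGroup E] [NormedSpace ℝ E] {K : Set E}

theorem Convex.ball_combo_subset (hK : Convex ℝ K) {x p : E} {ρ l : ℝ} (hx : x ∈ K)
    (hp : ball p ρ ⊆ K) (hl0 : 0 < l) (hl1 : l ≤ 1) :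
    ball ((1 - l) • x + l • p) (l * ρ) ⊆ K :=
  calc ball ((1 - l) • x + l • p) (l * ρ) = {(1 - l) • x} + l • ball p ρ := by
        rw [_root_.smul_ball hl0.ne', singleton_add_ball, Real.norm_of_nonneg hl0.le]
    _ ⊆ (1 - l) • K + l • K :=
        Set.add_subset_add (Set.singleton_subset_iff.2 (Set.smul_mem_smul_set hx))
          (Set.smul_set_mono hp)
    _ ⊆ K := hK.set_combo_subset (by linarith) hl0.le (by ring)

theorem Convex.exists_forall_measure_inter_ball_ge [FiniteDimensional ℝ E] [MeasurableSpace E]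
    [BorelSpace E] (μ : Measure E) [μ.IsAddHaarMeasure] (hK : Convex ℝ K)
    (hb : Bornology.IsBounded K) (hi : (interior K).Nonempty) :
    ∃ κ > 0, ∀ x ∈ K, ∀ t, 0 < t → t ≤ 1 →
      ENNReal.ofReal (κ * t ^ finrank ℝ E) ≤ μ (K ∩ ball x t) := by
  obtain ⟨p, hp⟩ := hi
  obtain ⟨ρ, hρ, hρK⟩ := isOpen_iff.1 isOpen_interior p hp
  have hball : ball p ρ ⊆ K := hρK.trans interior_subset
  obtain ⟨M, hM⟩ := hb.subset_closedBall p
  set R := max M 1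
  have hR : 1 ≤ R := le_max_right M 1
  have hμρ : 0 < (μ (ball 0 ρ)).toReal :=
    ENNReal.toReal_pos (measure_ball_pos μ 0 hρ).ne' measure_ball_lt_top.ne
  refine ⟨(ρ + R)⁻¹ ^ finrank ℝ E * (μ (ball 0 ρ)).toReal, by positivity,
    fun x hx t ht0 ht1 => ?_⟩
  -- shrink `ball p ρ` towards `x` by the factor `l`
  set l := t / (ρ + R)
  have hl0 : 0 < l := by positivity
  have hl1 : l ≤ 1 := (div_le_one (by positivity)).2 (by linarith)
  have hsub : ball ((1 - l) • x + l • p) (l * ρ) ⊆ K ∩ ball x t := by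
    refine Set.subset_inter (hK.ball_combo_subset hx hball hl0 hl1) (ball_subset_ball' ?_)
    have hpx : dist p x ≤ R := by
      rw [dist_comm]; exact (mem_closedBall.1 (hM hx)).trans (le_max_left M 1)
    calc l * ρ + dist ((1 - l) • x + l • p) x = l * ρ + l * dist p x := by
          rw [dist_eq_norm, dist_eq_norm, show (1 - l) • x + l • p - x = l • (p - x) by module,
            norm_smul, Real.norm_of_nonneg hl0.le]
      _ ≤ l * (ρ + R) := by nlinarith
      _ = t := div_mul_cancel₀ t (by positivity)
  calc ENNReal.ofReal ((ρ + R)⁻¹ ^ finrank ℝ E * (μ (ball 0 ρ)).toReal * t ^ finrank ℝ E)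
      = μ (ball ((1 - l) • x + l • p) (l * ρ)) := by
        rw [Measure.addHaar_ball_mul_of_pos μ _ hl0, mul_right_comm, ← mul_pow, inv_mul_eq_div,
          ENNReal.ofReal_mul (by positivity),
          ENNReal.ofReal_toReal measure_ball_lt_top.ne]
    _ ≤ μ (K ∩ ball x t) := measure_mono hsub

end ConvexBody

section Packing

variable {X : Type*} [PseudoMetricSpace X] [MeasurableSpace X] [OpensMeasurableSpace X]
  {μ : Measure X} {K : Set X} {ε : ℝ≥0} {a : ℝ≥0∞}

theorem card_mul_le_measure_of_isSeparated (hK : MeasurableSet K)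
    (ha : ∀ x ∈ K, a ≤ μ (K ∩ ball x (ε / 2))) {S : Finset X} (hSK : ↑S ⊆ K)
    (hS : IsSeparated ε (S : Set X)) : S.card * a ≤ μ K := by
  have hdisj : (S : Set X).PairwiseDisjoint fun x => K ∩ ball x (ε / 2) := by
    refine fun x hx y hy hxy => Disjoint.mono Set.inter_subset_right Set.inter_subset_right
      (ball_disjoint_ball ?_)
    have : (ε : ℝ≥0∞) < edist x y := hS hx hy hxy
    rw [edist_nndist, ENNReal.coe_lt_coe, ← NNReal.coe_lt_coe, coe_nndist] at this
    linarith
  calc S.card * a = ∑ x ∈ S, a := by rw [Finset.sum_const, nsmul_eq_mul]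
    _ ≤ ∑ x ∈ S, μ (K ∩ ball x (ε / 2)) := Finset.sum_le_sum fun x hx => ha x (hSK hx)
    _ = μ (⋃ x ∈ S, K ∩ ball x (ε / 2)) :=
        (measure_biUnion_finset hdisj fun x _ => hK.inter measurableSet_ball).symm
    _ ≤ μ K := measure_mono (Set.iUnion₂_subset fun _ _ => Set.inter_subset_left)

theorem packingNumber_ne_top_of_measure_inter_ball (hK : MeasurableSet K) (hμK : μ K ≠ ∞)
    (ha0 : a ≠ 0) (ha : ∀ x ∈ K, a ≤ μ (K ∩ ball x (ε / 2))) : packingNumber ε K ≠ ⊤ := by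
  obtain ⟨n, hn⟩ := ENNReal.exists_nat_mul_gt ha0 hμK
  refine ne_top_of_le_ne_top (ENat.natCast_ne_top n) (iSup₂_le fun C hCK => iSup_le fun hC => ?_)
  by_contra! hlt
  obtain ⟨S, hSC, hS⟩ := Set.exists_subset_encard_eq hlt.le
  have hfin := Set.finite_of_encard_eq_coe hS
  have hcard : hfin.toFinset.card = n := by
    rwa [hfin.encard_eq_coe_toFinset_card, Nat.cast_inj] at hS
  have := card_mul_le_measure_of_isSeparated hK ha (S := hfin.toFinset)
    (by simpa using hSC.trans hCK) (by simpa using hC.subset hSC)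
  rw [hcard] at this
  exact (hn.trans_le this).false

theorem exists_finset_isCover_card_mul_le (hK : MeasurableSet K) (hμK : μ K ≠ ∞) (ha0 : a ≠ 0)
    (ha : ∀ x ∈ K, a ≤ μ (K ∩ ball x (ε / 2))) :
    ∃ T : Finset X, ↑T ⊆ K ∧ IsCover ε K T ∧ T.card * a ≤ μ K := by
  have hpack := packingNumber_ne_top_of_measure_inter_ball hK hμK ha0 ha
  have hfin : (maximalSeparatedSet ε K).Finite := by
    rw [← Set.encard_ne_top_iff, encard_maximalSeparatedSet hpack]
    exact hpack
  refine ⟨hfin.toFinset, by simpa using maximalSeparatedSet_subset, by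
    simpa using isCover_maximalSeparatedSet hpack, ?_⟩
  exact card_mul_le_measure_of_isSeparated hK ha (by simpa using maximalSeparatedSet_subset)
    (by simpa using isSeparated_maximalSeparatedSet)

end Packing

section Sampling

open pdf

variable {X : Type*} [MeasurableSpace X] {μ : Measure X} {K : Set X}
  {Ω : Type*} [MeasurableSpace Ω] {P : Measure Ω}

theorem MeasureTheory.pdf.IsUniform.ae_mem {Y : Ω → X} (hu : IsUniform Y K P μ)
    (hK : MeasurableSet K) (h0 : μ K ≠ 0) (htop : μ K ≠ ∞) : ∀ᵐ ω ∂P, Y ω ∈ K := by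
  change P (Y ⁻¹' Kᶜ) = 0
  rw [hu.measure_preimage h0 htop hK.compl, Set.inter_compl_self, measure_empty,
    ENNReal.zero_div]

variable [IsProbabilityMeasure P] {Y : ℕ → Ω → X}

theorem measureReal_iInter_preimage_compl_le (hind : iIndepFun Y P)
    (hunif : ∀ j, IsUniform (Y j) K P μ) (h0 : μ K ≠ 0) (htop : μ K ≠ ∞) {A : Set X}
    (hA : MeasurableSet A) (n : ℕ) :
    P.real (⋂ j ∈ Finset.range n, Y j ⁻¹' Aᶜ) ≤ Real.exp (-(n * μ.real (K ∩ A) / μ.real K)) := by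
  have hprob : ∀ j, P (Y j ⁻¹' Aᶜ) = 1 - μ (K ∩ A) / μ K := fun j => by
    rw [Set.preimage_compl, prob_compl_eq_one_sub₀
      (((hunif j).aemeasurable h0 htop).nullMeasurableSet_preimage hA),
      (hunif j).measure_preimage h0 htop hA]
  have hle : μ.real (K ∩ A) / μ.real K ≤ 1 :=
    div_le_one_of_le₀ (measureReal_mono Set.inter_subset_left htop) measureReal_nonneg
  rw [measureReal_def, hind.measure_inter_preimage_eq_mul _ fun _ _ => hA.compl,
    Finset.prod_congr rfl fun j _ => hprob j, Finset.prod_const, Finset.card_range,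
    ENNReal.toReal_pow, ENNReal.toReal_sub_of_le (ENNReal.div_le_of_le_mul (by
      rw [one_mul]; exact measure_mono Set.inter_subset_left)) ENNReal.one_ne_top,
    ENNReal.toReal_one, ENNReal.toReal_div, ← measureReal_def, ← measureReal_def]
  calc (1 - μ.real (K ∩ A) / μ.real K) ^ n ≤ Real.exp (-(μ.real (K ∩ A) / μ.real K)) ^ n :=
        pow_le_pow_left₀ (sub_nonneg.2 hle) (Real.one_sub_le_exp_neg _) n
    _ = Real.exp (-(n * μ.real (K ∩ A) / μ.real K)) := by
        rw [← Real.exp_nat_mul]; ring_nf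

end Sampling

section Coverage

open pdf

variable {X : Type*} [PseudoMetricSpace X] [MeasurableSpace X] [OpensMeasurableSpace X]
  {μ : Measure X} {K : Set X} {Ω : Type*} [MeasurableSpace Ω] {P : Measure Ω}
  [IsProbabilityMeasure P] {Y : ℕ → Ω → X}

theorem measureReal_not_subset_iUnion_ball_le (hind : iIndepFun Y P)
    (hunif : ∀ j, IsUniform (Y j) K P μ) (hK : MeasurableSet K) (h0 : μ K ≠ 0) (htop : μ K ≠ ∞)
    {ε a b : ℝ} (hε : 0 ≤ ε) (ha0 : 0 < a)
    (ha : ∀ x ∈ K, ENNReal.ofReal a ≤ μ (K ∩ ball x (ε / 2)))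
    (hb : ∀ x ∈ K, ENNReal.ofReal b ≤ μ (K ∩ ball x ε)) (n : ℕ) :
    P.real {ω | ¬ K ⊆ ⋃ j : Fin n, ball (Y j ω) (2 * ε)} ≤
      μ.real K / a * Real.exp (-(n * b / μ.real K)) := by
  obtain ⟨T, hTK, hTcov, hTcard⟩ := exists_finset_isCover_card_mul_le (ε := ε.toNNReal) hK htop
    (ENNReal.ofReal_pos.2 ha0).ne' (by simpa [Real.coe_toNNReal _ hε] using ha)
  set miss : X → Set Ω := fun z => ⋂ j ∈ Finset.range n, Y j ⁻¹' (ball z ε)ᶜ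
  have hsub : {ω | ¬ K ⊆ ⋃ j : Fin n, ball (Y j ω) (2 * ε)} ⊆ ⋃ z ∈ T, miss z := by
    intro ω hω
    by_contra hhit
    refine hω fun x hx => ?_
    obtain ⟨z, hzT, hxz⟩ := Set.mem_iUnion₂.1 (isCover_iff_subset_iUnion_closedBall.1 hTcov hx)
    obtain ⟨j, hj, hjz⟩ : ∃ j ∈ Finset.range n, Y j ω ∈ ball z ε := by
      simpa [miss] using fun h => hhit (Set.mem_biUnion hzT h)
    refine Set.mem_iUnion.2 ⟨⟨j, Finset.mem_range.1 hj⟩, ?_⟩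
    rw [mem_closedBall, Real.coe_toNNReal _ hε] at hxz
    show dist x (Y j ω) < 2 * ε
    linarith [dist_triangle x z (Y j ω), mem_ball'.1 hjz]
  have hmiss : ∀ z ∈ T, P.real (miss z) ≤ Real.exp (-(n * b / μ.real K)) := fun z hz => by
    refine (measureReal_iInter_preimage_compl_le hind hunif h0 htop measurableSet_ball n).trans ?_
    have hbz : b ≤ μ.real (K ∩ ball z ε) :=
      (ENNReal.ofReal_le_iff_le_toReal (measure_ne_top_of_subset Set.inter_subset_left htop)).1
        (hb z (hTK hz))
    gcongr
  have hcard : (T.card : ℝ) ≤ μ.real K / a := by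
    rw [le_div_iff₀ ha0]
    have := ENNReal.toReal_mono htop hTcard
    rwa [ENNReal.toReal_mul, ENNReal.toReal_ofReal ha0.le, ENNReal.toReal_natCast] at this
  calc P.real {ω | ¬ K ⊆ ⋃ j : Fin n, ball (Y j ω) (2 * ε)}
      ≤ P.real (⋃ z ∈ T, miss z) := measureReal_mono hsub (measure_ne_top P _)
    _ ≤ ∑ z ∈ T, P.real (miss z) := measureReal_biUnion_finset_le T miss
    _ ≤ T.card * Real.exp (-(n * b / μ.real K)) := by
        simpa using Finset.sum_le_card_nsmul T _ _ hmiss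
    _ ≤ μ.real K / a * Real.exp (-(n * b / μ.real K)) := by gcongr

end Coverage

theorem tendsto_measureReal_one_of_compl_le {Ω ι : Type*} [MeasurableSpace Ω] {P : Measure Ω}
    [IsProbabilityMeasure P] {l : Filter ι} {S : ι → Set Ω} {f : ι → ℝ}
    (hf : Tendsto f l (𝓝 0)) (hS : ∀ᶠ i in l, P.real (S i)ᶜ ≤ f i) :
    Tendsto (fun i => P.real (S i)) l (𝓝 1) := by
  refine tendsto_of_tendsto_of_tendsto_of_le_of_le' (by simpa using tendsto_const_nhds.sub hf)
    tendsto_const_nhds ?_ (.of_forall fun i => measureReal_le_one)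
  filter_upwards [hS] with i hi
  have := measureReal_union_le (μ := P) (S i) (S i)ᶜ
  rw [Set.union_compl_self, probReal_univ] at this
  linarith

theorem exists_coverage_bound_tendsto_zero (d : ℕ) {V κ : ℝ} (hV : 0 < V) (hκ : 0 < κ) :
    ∃ B > 0, ∀ r : ℕ → ℝ, (∀ n, 0 < r n) →
      (∀ᶠ n : ℕ in atTop, B * Real.log n ≤ n * r n ^ d) →
      Tendsto (fun n : ℕ => V / (κ * (r n / 8) ^ d) * Real.exp (-(n * (κ * (r n / 4) ^ d) / V)))
        atTop (𝓝 0) := by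
  set B := 2 * 4 ^ d * V / κ
  refine ⟨B, by positivity, fun r hr hrB => ?_⟩
  refine squeeze_zero' (.of_forall fun n => by have := hr n; positivity) ?_
    (tendsto_const_div_atTop_nhds_zero_nat (8 ^ d * V / (κ * B)))
  filter_upwards [hrB, eventually_ge_atTop 3] with n hn hn3
  have hn0 : (0 : ℝ) < n := by positivity
  have hlog : 1 ≤ Real.log n := by
    rw [Real.le_log_iff_exp_le hn0]
    have h3 : (3 : ℝ) ≤ n := by exact_mod_cast hn3
    linarith [Real.exp_one_lt_d9]
  have hrn := hr n
  have hexp : Real.exp (-(n * (κ * (r n / 4) ^ d) / V)) ≤ (n : ℝ)⁻¹ ^ 2 := by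
    rw [← Real.exp_log (by positivity : (0 : ℝ) < (n : ℝ)⁻¹ ^ 2), Real.log_pow, Real.log_inv]
    apply Real.exp_le_exp.2
    have : n * (κ * (r n / 4) ^ d) / V = κ / (4 ^ d * V) * (n * r n ^ d) := by
      rw [div_pow]; field_simp
    have hB : κ / (4 ^ d * V) * B = 2 := by simp only [B]; field_simp
    rw [this]
    nlinarith [mul_le_mul_of_nonneg_left hn (by positivity : 0 ≤ κ / (4 ^ d * V))]
  have hpre : V / (κ * (r n / 8) ^ d) ≤ 8 ^ d * V / (κ * B) * n := by
    rw [div_pow, div_le_iff₀ (by positivity)]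
    have : B ≤ n * r n ^ d := le_trans (by nlinarith [(by positivity : 0 < B)]) hn
    have hB0 : 0 < B := by positivity
    calc V = 8 ^ d * V / (κ * B) * (κ * (B / 8 ^ d)) := by field_simp
      _ ≤ 8 ^ d * V / (κ * B) * (κ * (n * r n ^ d / 8 ^ d)) := by gcongr
      _ = 8 ^ d * V / (κ * B) * n * (κ * (r n ^ d / 8 ^ d)) := by ring
  calc V / (κ * (r n / 8) ^ d) * Real.exp (-(n * (κ * (r n / 4) ^ d) / V))
      ≤ 8 ^ d * V / (κ * B) * n * (n : ℝ)⁻¹ ^ 2 :=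
        mul_le_mul hpre hexp (Real.exp_nonneg _) (by positivity)
    _ = 8 ^ d * V / (κ * B) / n := by field_simp

theorem ball_union_contractible_general {d : ℕ}
    {Ω : Type*} [MeasurableSpace Ω] (P : Measure Ω) [IsProbabilityMeasure P]
    (K : Set (EuclideanSpace ℝ (Fin d)))
    (hK_compact : IsCompact K) (hK_convex : Convex ℝ K)
    (hK_interior : (interior K).Nonempty)
    (X : ℕ → Ω → EuclideanSpace ℝ (Fin d))
    (hX_indep : iIndepFun X P)
    (hX_law : ∀ n, Measure.map (X n) P
      = (volume K)⁻¹ • (volume : Measure (EuclideanSpace ℝ (Fin d))).restrict K)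
 :
    ∃ B : ℝ, 0 < B ∧
      ∀ r : ℕ → ℝ, (∀ n, 0 < r n) → Tendsto r atTop (𝓝 0) →
        (∀ᶠ n : ℕ in atTop, B * Real.log n ≤ (n : ℝ) * r n ^ d) →
        Tendsto (fun n : ℕ =>
            (P {ω | ContractibleSpace ↥(ballUnion n (r n / 2) (X · ω))}).toReal)
          atTop (𝓝 1) := by
  have hunif : ∀ j, pdf.IsUniform (X j) K P := hX_law
  have hKm : MeasurableSet K := hK_compact.isClosed.measurableSet
  have h0 : volume K ≠ 0 := (Measure.measure_pos_of_nonempty_interior _ hK_interior).ne'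
  have htop : volume K ≠ ∞ := hK_compact.measure_lt_top.ne
  have hin : ∀ᵐ ω ∂P, ∀ j, X j ω ∈ K := ae_all_iff.2 fun j => (hunif j).ae_mem hKm h0 htop
  obtain ⟨κ, hκ, hvol⟩ :=
    hK_convex.exists_forall_measure_inter_ball_ge volume hK_compact.isBounded hK_interior
  rw [finrank_euclideanSpace_fin] at hvol
  obtain ⟨B, hB, hrate⟩ := exists_coverage_bound_tendsto_zero d (ENNReal.toReal_pos h0 htop) hκ
  refine ⟨B, hB, fun r hr hr0 hrB => tendsto_measureReal_one_of_compl_le (hrate r hr hrB) ?_⟩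
  filter_upwards [hr0.eventually (eventually_le_nhds (by norm_num : (0 : ℝ) < 4))] with n hr4
  have hrn := hr n
  have hcover : ∀ᵐ ω ∂P, K ⊆ ⋃ j : Fin n, ball (X j ω) (2 * (r n / 4)) →
      ContractibleSpace ↥(ballUnion n (r n / 2) (X · ω)) := by
    filter_upwards [hin] with ω hω hK
    rw [show 2 * (r n / 4) = r n / 2 by ring] at hK
    exact contractibleSpace_iUnion_ball (hK_interior.mono interior_subset)
      hK_compact.isComplete hK_convex (fun j => hω j) hK
  refine (ENNReal.toReal_mono (measure_ne_top P _)
    (measure_mono_ae (hcover.mono fun ω h => mt h))).trans ?_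
  refine measureReal_not_subset_iUnion_ball_le hX_indep hunif hKm h0 htop (by positivity)
    (by positivity) (fun x hx => ?_) (fun x hx => hvol x hx _ (by positivity)
      (by linarith)) n
  rw [show r n / 4 / 2 = r n / 8 by ring]
  exact hvol x hx _ (by positivity) (by linarith)

/-- above the coverage radius, the union of balls around a uniform sample from a
convex body is a.a.s. contractible. -/
theorem ball_union_contractible {d : ℕ} (hd : 2 ≤ d)
    {Ω : Type*} [MeasurableSpace Ω] (P : Measure Ω) [IsProbabilityMeasure P]
    (K : Set (EuclideanSpace ℝ (Fin d)))
    (hK_compact : IsCompact K) (hK_convex : Convex ℝ K)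
    (hK_interior : (interior K).Nonempty)
    (X : ℕ → Ω → EuclideanSpace ℝ (Fin d))
    (hX_meas : ∀ n, Measurable (X n))
    (hX_indep : iIndepFun X P)
    (hX_law : ∀ n, Measure.map (X n) P
      = (volume K)⁻¹ • (volume : Measure (EuclideanSpace ℝ (Fin d))).restrict K)
 :
    ∃ B : ℝ, 0 < B ∧
      ∀ r : ℕ → ℝ, (∀ n, 0 < r n) → Tendsto r atTop (𝓝 0) →
        (∀ᶠ n : ℕ in atTop, B * Real.log n ≤ (n : ℝ) * r n ^ d) →
        Tendsto (fun n : ℕ =>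
            (P {ω | ContractibleSpace ↥(ballUnion n (r n / 2) (X · ω))}).toReal)
          atTop (𝓝 1) :=
  ball_union_contractible_general P K hK_compact hK_convex hK_interior X hX_indep hX_law

end
end
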